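/- Under hypotheses (i)–(iv) below, the operator Θ is a cochain map: for every k ∈ ℤ one has Θ_{k+1} ∘ Θ_k = 0, so that (V_*, Θ) is a cochain complex. -/
import Mathlib


/-- Cast between components of a graded family of modules along an index equality. -/
noncomputable def vcast {V : ℤ → Type*} [∀ k, AddCommGroup (V k)] [∀ k, Module ℝ (V k)]
    {a b : ℤ} (h : a = b) : V a →ₗ[ℝ] V b := by
  subst h; exact LinearMap.id

theorem vcast_vcast {V : ℤ → Type*} [∀ k, AddCommGroup (V k)] [∀ k, Module ℝ (V k)]
    {a b c : ℤ} (h1 : a = b) (h2 : b = c) (x : V a) :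
    vcast (V := V) h2 (vcast (V := V) h1 x) = vcast (V := V) (h1.trans h2) x := by
  subst h1; subst h2; rfl

theorem vcast_self {V : ℤ → Type*} [∀ k, AddCommGroup (V k)] [∀ k, Module ℝ (V k)]
    {a : ℤ} (h : a = a) (x : V a) : vcast (V := V) h x = x := rfl

theorem map_vcast {V : ℤ → Type*} [∀ k, AddCommGroup (V k)] [∀ k, Module ℝ (V k)]
    (f : ℤ → ℤ) (F : ∀ k : ℤ, V k →ₗ[ℝ] V (f k)) {a b : ℤ} (h : a = b) (x : V a) :
    F b (vcast (V := V) h x) = vcast (V := V) (congrArg f h) (F a x) := by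
  subst h; rfl

/-- Θ is a cochain map: Θ ∘ Θ = 0, so (V_*, Θ) is a cochain complex. -/
theorem theta_comp_theta_eq_zero (n : ℤ) (hn : 2 ≤ n)
    (V : ℤ → Type*) [∀ k, AddCommGroup (V k)] [∀ k, Module ℝ (V k)]
    (d : ∀ k : ℤ, V k →ₗ[ℝ] V (k + 1))
    (Φ : ∀ k : ℤ, V k →ₗ[ℝ] V (n - 1 - k))
    (Ψ : ∀ k : ℤ, V k →ₗ[ℝ] V (k - 1))
    (hd : ∀ k : ℤ, d (k + 1) ∘ₗ d k = 0)
    (h1 : ∀ k : ℤ,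
      vcast (V := V) (show n - 1 - (k - 1) = n - 1 - k + 1 by ring) ∘ₗ Φ (k - 1) ∘ₗ Ψ k
        = ((-1 : ℝ) ^ k) • (d (n - 1 - k) ∘ₗ Φ k))
    (h2 : ∀ k : ℤ, Ψ (k - 1) ∘ₗ Ψ k = 0)
    (h3 : ∀ k : ℤ,
      Ψ (n - 1 - k) ∘ₗ Φ k
        = ((-1 : ℝ) ^ (k + 1)) •
            (vcast (V := V) (show n - 1 - (k + 1) = n - 1 - k - 1 by ring) ∘ₗ Φ (k + 1) ∘ₗ d k))
    (h4 : ∀ k : ℤ,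
      vcast (V := V) (show n - 1 - (n - 1 - k) = k by ring) ∘ₗ Φ (n - 1 - k) ∘ₗ Φ k
        = ((-1 : ℝ) ^ (k * n)) •
            (vcast (V := V) (show k - 1 + 1 = k by ring) ∘ₗ d (k - 1) ∘ₗ Ψ k
              + vcast (V := V) (show k + 1 - 1 = k by ring) ∘ₗ Ψ (k + 1) ∘ₗ d k))
    (Θ : ∀ k : ℤ, V k →ₗ[ℝ] V (k + 1))
    (hΘ : ∀ k : ℤ,
      Θ k = ((-1 : ℝ) ^ ((k + 1) * (n - 1))) •
        (vcast (V := V) (show n - 1 - (n - 2 - k) = k + 1 by ring) ∘ₗ Φ (n - 2 - k) ∘ₗ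
          vcast (V := V) (show n - 1 - k - 1 = n - 2 - k by ring) ∘ₗ Ψ (n - 1 - k) ∘ₗ Φ k)) :
    ∀ k : ℤ,
      Θ (k + 1) ∘ₗ Θ k = 0 := by
  have Φv : ∀ {a b : ℤ} (h : a = b) (x : V a),
      Φ b (vcast (V := V) h x)
        = vcast (V := V) (congrArg (fun t => n - 1 - t) h) (Φ a x) :=
    fun h x => map_vcast (fun t => n - 1 - t) Φ h x
  have Ψv : ∀ {a b : ℤ} (h : a = b) (x : V a),
      Ψ b (vcast (V := V) h x)
        = vcast (V := V) (congrArg (fun t => t - 1) h) (Ψ a x) :=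
    fun h x => map_vcast (fun t => t - 1) Ψ h x
  have dv : ∀ {a b : ℤ} (h : a = b) (x : V a),
      d b (vcast (V := V) h x)
        = vcast (V := V) (congrArg (fun t => t + 1) h) (d a x) :=
    fun h x => map_vcast (fun t => t + 1) d h x
  have h2' : ∀ j : ℤ, ∀ u : V j, Ψ (j - 1) (Ψ j u) = 0 := by
    intro j u
    have := LinearMap.congr_fun (h2 j) u
    simpa using this
  have h4' : ∀ j : ℤ, ∀ z : V j,
      Φ (n - 1 - j) (Φ j z)
        = vcast (V := V) (show j = n - 1 - (n - 1 - j) by ring)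
            (((-1 : ℝ) ^ (j * n)) •
              (vcast (V := V) (show j - 1 + 1 = j by ring) (d (j - 1) (Ψ j z))
                + vcast (V := V) (show j + 1 - 1 = j by ring) (Ψ (j + 1) (d j z)))) := by
    intro j z
    have h := LinearMap.congr_fun (h4 j) z
    simp only [LinearMap.comp_apply, LinearMap.smul_apply, LinearMap.add_apply] at h
    rw [← h, vcast_vcast, vcast_self]
  intro k
  rw [hΘ (k + 1), hΘ k]
  ext x
  simp only [LinearMap.comp_apply, LinearMap.smul_apply, LinearMap.zero_apply, map_smul,
    Φv, Ψv, dv, vcast_vcast, h4', h2', map_add, map_zero, smul_add, smul_zero, add_zero,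
    zero_add]
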